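/- Let ω = e^{2πi/3}, Λ = ℤω ⊕ ℤ, θ(z) := −∑_{n∈ℤ} exp(πi(n+1/2)²ω + 2πi(n+1/2)(z+1/2)), z(k) := √3·k/(4πi), and F_k(z) := e^{(i/2)(z−conj(z))k}·θ(z−z(k))/θ(z) for z ∉ Λ. Then for every k ∈ ℂ, every m,n ∈ ℤ and every z ∈ ℂ∖Λ, one has F_k(z + m + nω) = F_k(z); that is, F_k is Λ-periodic on ℂ∖Λ. -/

import Mathlib

open Complex

noncomputable section

/-- `ω = e^{2πi/3}`. -/
def ω : ℂ := Complex.exp (2 * (Real.pi : ℂ) * Complex.I / 3)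

/-- The hexagonal lattice `Λ = ℤω ⊕ ℤ`. -/
def inΛ (γ : ℂ) : Prop := ∃ m n : ℤ, γ = (m : ℂ) * ω + (n : ℂ)

/-- The Jacobi theta function `θ₁(z|ω)`. -/
def θ (z : ℂ) : ℂ :=
  -∑' n : ℤ, Complex.exp ((Real.pi : ℂ) * Complex.I * ((n : ℂ) + 1/2)^2 * ω
      + 2 * (Real.pi : ℂ) * Complex.I * ((n : ℂ) + 1/2) * (z + 1/2))

/-- `z(k) = √3 k/(4πi)`. -/
def zmap (k : ℂ) : ℂ := (Real.sqrt 3 : ℂ) * k / (4 * (Real.pi : ℂ) * Complex.I)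

/-- `F_k(z) = e^{(i/2)(z - z̄)k} θ(z - z(k))/θ(z)`. -/
def F (k z : ℂ) : ℂ :=
  Complex.exp ((Complex.I / 2) * (z - (starRingEnd ℂ) z) * k) * θ (z - zmap k) / θ z

/-
Shifting `z` by `m + nω` shifts the summation index of `θ` by `n`, so `θ` picks up the
factor `exp(πi(m - n) - πin²ω - 2πinz)`. In the quotient `θ(z - z(k))/θ(z)` the factors differ
by `exp(2πin z(k)) = exp(√3nk/2)`, and since `ω - ω̄ = √3 i` the prefactor
`e^{(i/2)(z - z̄)k}` changes by exactly the inverse `exp(-√3nk/2)`.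
-/

def θTerm (z : ℂ) (j : ℤ) : ℂ :=
  Complex.exp ((Real.pi : ℂ) * Complex.I * ((j : ℂ) + 1/2)^2 * ω
      + 2 * (Real.pi : ℂ) * Complex.I * ((j : ℂ) + 1/2) * (z + 1/2))

lemma θ_eq_neg_tsum_θTerm (z : ℂ) : θ z = -∑' j : ℤ, θTerm z j := rfl

lemma θTerm_add_int_add_int_mul_ω (m n j : ℤ) (z : ℂ) :
    θTerm (z + m + n * ω) j =
      Complex.exp ((Real.pi : ℂ) * Complex.I * (m - n) - (Real.pi : ℂ) * Complex.I * n ^ 2 * ω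
        - 2 * (Real.pi : ℂ) * Complex.I * n * z) * θTerm z (j + n) := by
  rw [θTerm, θTerm, ← Complex.exp_add, Complex.exp_eq_exp_iff_exists_int]
  exact ⟨j * m, by push_cast; ring⟩

-- No convergence is needed: the proof only reindexes the series.
theorem θ_add_int_add_int_mul_ω (m n : ℤ) (z : ℂ) :
    θ (z + m + n * ω) =
      Complex.exp ((Real.pi : ℂ) * Complex.I * (m - n) - (Real.pi : ℂ) * Complex.I * n ^ 2 * ω
        - 2 * (Real.pi : ℂ) * Complex.I * n * z) * θ z := by
  simp only [θ_eq_neg_tsum_θTerm, θTerm_add_int_add_int_mul_ω, tsum_mul_left, mul_neg]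
  congr 2
  exact (Equiv.addRight n).tsum_eq (θTerm z)

lemma ω_im : ω.im = Real.sqrt 3 / 2 := by
  rw [ω, show 2 * (Real.pi : ℂ) * Complex.I / 3 = ((2 * Real.pi / 3 : ℝ) : ℂ) * Complex.I by
      push_cast; ring, exp_ofReal_mul_I_im,
    show 2 * Real.pi / 3 = Real.pi - Real.pi / 3 by ring, Real.sin_pi_sub, Real.sin_pi_div_three]

lemma ω_sub_conj : ω - (starRingEnd ℂ) ω = (Real.sqrt 3 : ℂ) * Complex.I := by
  rw [sub_conj, ω_im]
  push_cast
  ring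

lemma two_pi_I_mul_zmap (k : ℂ) : 2 * (Real.pi : ℂ) * Complex.I * zmap k = Real.sqrt 3 * k / 2 := by
  have hπ : (Real.pi : ℂ) ≠ 0 := by exact_mod_cast Real.pi_ne_zero
  rw [zmap]
  field_simp
  ring

theorem stmt3_general (k : ℂ) (m n : ℤ) (z : ℂ) :
    F k (z + (m : ℂ) + (n : ℂ) * ω) = F k z := by
  set E : ℂ → ℂ := fun w => (Real.pi : ℂ) * Complex.I * (m - n)
    - (Real.pi : ℂ) * Complex.I * n ^ 2 * ω - 2 * (Real.pi : ℂ) * Complex.I * n * w with hE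
  have hθ (w : ℂ) : θ (w + m + n * ω) = Complex.exp (E w) * θ w := θ_add_int_add_int_mul_ω m n w
  have hexponent : (Complex.I / 2) * (z + m + n * ω - (starRingEnd ℂ) (z + m + n * ω)) * k
      + E (z - zmap k) = (Complex.I / 2) * (z - (starRingEnd ℂ) z) * k + E z := by
    simp only [hE, map_add, map_mul, map_intCast]
    linear_combination (Complex.I / 2 * n * k) * ω_sub_conj + n * two_pi_I_mul_zmap k
      + (Real.sqrt 3 * n * k / 2 : ℂ) * Complex.I_sq
  rw [F, F, show z + m + n * ω - zmap k = z - zmap k + m + n * ω by ring, hθ, hθ,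
    ← mul_assoc, ← Complex.exp_add, hexponent, Complex.exp_add, mul_right_comm,
    mul_comm (Complex.exp (E z)), mul_div_mul_right _ _ (Complex.exp_ne_zero _)]

theorem stmt3 (k : ℂ) (m n : ℤ) (z : ℂ) (hz : ¬ inΛ z) :
    F k (z + (m : ℂ) + (n : ℂ) * ω) = F k z :=
  stmt3_general k m n z

end
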